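/- Let p ∈ (0,1) and let ν be a probability measure on ℝ satisfying a weak Poincaré inequality with rate function β(s) = c·(log(2/(s∧1)))^{2(1/p − 1)} for some constant c > 0. Let (S_t)_{t≥0} be a family of linear operators on bounded smooth functions on ℝ such that S_0 = Id, S_{t+s} = S_t ∘ S_s, ‖S_t g‖_∞ ≤ ‖g‖_∞, ν(S_t g) = ν(g), and for every bounded smooth g the map t ↦ ∫ (S_t g − ν(g))² dν is differentiable with derivative −2∫ ((S_t g)')² dν. Then there exists a constant C = C(p, c) > 0 such that for every bounded smooth f and every t > 0: Var_ν(S_t f) ≤ (1/C)·e^{−C·t^{p/(2−p)}}·‖f − ν(f)‖_∞². -/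

import Mathlib

open MeasureTheory Real
open scoped BigOperators ENNReal

noncomputable section

/-- Variance of `f` under `μ`. -/
def var {X : Type*} [MeasurableSpace X] (μ : Measure X) (f : X → ℝ) : ℝ :=
  (∫ x, f x ^ 2 ∂μ) - (∫ x, f x ∂μ) ^ 2

/-- The oscillation `Osc(f) = sup f - inf f`. -/
def osc {X : Type*} (f : X → ℝ) : ℝ := (⨆ x, f x) - ⨅ x, f x

/-- The sup norm `‖f‖_∞`. -/
def supNorm {X : Type*} (f : X → ℝ) : ℝ := ⨆ x, |f x|

/-- Bounded smooth function on `ℝ`. -/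
def BddSmooth (f : ℝ → ℝ) : Prop := ContDiff ℝ (⊤ : ℕ∞) f ∧ ∃ M, ∀ x, |f x| ≤ M

/-- `ν` satisfies the weak Poincaré inequality with rate function `β`. -/
def WeakPoincare (ν : Measure ℝ) (β : ℝ → ℝ) : Prop :=
  ∀ f : ℝ → ℝ, BddSmooth f → ∀ s : ℝ, 0 < s →
    var ν f ≤ β s * (∫ x, (deriv f x) ^ 2 ∂ν) + s * (osc f) ^ 2

structure SemigroupHyp (ν : Measure ℝ) (S : ℝ → (ℝ → ℝ) → (ℝ → ℝ)) : Prop where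
  stable : ∀ t : ℝ, 0 ≤ t → ∀ g, BddSmooth g → BddSmooth (S t g)
  idZero : ∀ g, BddSmooth g → S 0 g = g
  semigroup : ∀ t s : ℝ, 0 ≤ t → 0 ≤ s → ∀ g, BddSmooth g → S (t + s) g = S t (S s g)
  contraction : ∀ t : ℝ, 0 ≤ t → ∀ g, BddSmooth g → ∀ x, |S t g x| ≤ supNorm g
  invariant : ∀ t : ℝ, 0 ≤ t → ∀ g, BddSmooth g → ∫ x, S t g x ∂ν = ∫ x, g x ∂ν
  linear : ∀ t : ℝ, 0 ≤ t → ∀ (a : ℝ) (g h : ℝ → ℝ), BddSmooth g → BddSmooth h →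
    S t (fun y => a * g y + h y) = fun y => a * S t g y + S t h y
  l2deriv : ∀ g, BddSmooth g → ∀ t : ℝ, 0 ≤ t →
    HasDerivAt (fun τ => ∫ x, (S τ g x - ∫ y, g y ∂ν) ^ 2 ∂ν)
      (-2 * ∫ x, (deriv (S t g) x) ^ 2 ∂ν) t

/-! ### Auxiliary lemmas -/

lemma BddSmooth.sub_const' {f : ℝ → ℝ} (hf : BddSmooth f) (a : ℝ) :
    BddSmooth (fun x => f x - a) := by
  obtain ⟨hcd, M, hM⟩ := hf
  refine ⟨hcd.sub contDiff_const, M + |a|, fun x => ?_⟩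
  have h1 := abs_le.1 (hM x)
  have h2 := le_abs_self a
  have h3 := neg_abs_le a
  show |f x - a| ≤ M + |a|
  exact abs_le.2 ⟨by linarith [h1.1], by linarith [h1.2]⟩

lemma BddSmooth.sq' {f : ℝ → ℝ} (hf : BddSmooth f) : BddSmooth (fun x => f x ^ 2) := by
  obtain ⟨hcd, M, hM⟩ := hf
  refine ⟨hcd.pow 2, M ^ 2, fun x => ?_⟩
  show |f x ^ 2| ≤ M ^ 2
  rw [abs_pow]
  exact pow_le_pow_left₀ (abs_nonneg _) (hM x) 2

lemma BddSmooth.integrable' {f : ℝ → ℝ} (hf : BddSmooth f) (ν : Measure ℝ)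
    [IsProbabilityMeasure ν] : Integrable f ν := by
  obtain ⟨hcd, M, hM⟩ := hf
  exact ⟨hcd.continuous.aestronglyMeasurable,
    HasFiniteIntegral.of_bounded (C := M) (ae_of_all _ fun x => by simpa using hM x)⟩

lemma abs_le_supNorm' {g : ℝ → ℝ} {M : ℝ} (hb : ∀ x, |g x| ≤ M) (x : ℝ) :
    |g x| ≤ supNorm g :=
  le_ciSup ⟨M, by rintro y ⟨z, rfl⟩; exact hb z⟩ x

lemma osc_sq_le' {g : ℝ → ℝ} {M : ℝ} (hb : ∀ x, |g x| ≤ M) : osc g ^ 2 ≤ 4 * M ^ 2 := by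
  have hub : ∀ x, g x ≤ M := fun x => (abs_le.1 (hb x)).2
  have hlb : ∀ x, -M ≤ g x := fun x => (abs_le.1 (hb x)).1
  have hba : BddAbove (Set.range g) := ⟨M, by rintro y ⟨x, rfl⟩; exact hub x⟩
  have hbb : BddBelow (Set.range g) := ⟨-M, by rintro y ⟨x, rfl⟩; exact hlb x⟩
  have h1 : (⨆ x, g x) ≤ M := ciSup_le hub
  have h2 : -M ≤ ⨅ x, g x := le_ciInf hlb
  have h3 : (⨅ x, g x) ≤ ⨆ x, g x := (ciInf_le hbb 0).trans (le_ciSup hba 0)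
  have : osc g = (⨆ x, g x) - ⨅ x, g x := rfl
  nlinarith [this]

lemma var_eq_integral' (ν : Measure ℝ) [IsProbabilityMeasure ν] {g : ℝ → ℝ}
    (hg1 : Integrable g ν) (hg2 : Integrable (fun x => g x ^ 2) ν) :
    var ν g = ∫ x, (g x - ∫ y, g y ∂ν) ^ 2 ∂ν := by
  set m := ∫ y, g y ∂ν with hm
  have hexp : ∀ x, (g x - m) ^ 2 = g x ^ 2 - 2 * m * g x + m ^ 2 := fun x => by ring
  rw [var]
  simp_rw [hexp]
  have hint1 : Integrable (fun x => g x ^ 2 - 2 * m * g x) ν :=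
    hg2.sub (hg1.const_mul (2 * m))
  rw [integral_add hint1 (integrable_const _),
    integral_sub hg2 (hg1.const_mul (2 * m)), integral_const_mul]
  simp only [integral_const, measure_univ, probReal_univ, ENNReal.toReal_one, smul_eq_mul, one_mul, ← hm]
  ring

/-- Gronwall-type lemma. -/
lemma gronwall_aux (φ G : ℝ → ℝ) (k a : ℝ) (hk : 0 ≤ k)
    (hd : ∀ τ, 0 ≤ τ → HasDerivAt φ (-2 * G τ) τ)
    (hineq : ∀ τ, 0 < τ → k * (φ τ - a) ≤ 2 * G τ)
    (t : ℝ) (ht : 0 ≤ t) :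
    φ t ≤ a + Real.exp (-(k * t)) * (φ 0 - a) := by
  set Ψ : ℝ → ℝ := fun τ => Real.exp (k * τ) * (φ τ - a) with hΨ
  have hdΨ : ∀ τ, 0 ≤ τ → HasDerivAt Ψ
      (Real.exp (k * τ) * (k * 1) * (φ τ - a) + Real.exp (k * τ) * (-2 * G τ)) τ := by
    intro τ hτ
    exact (((hasDerivAt_id τ).const_mul k).exp).mul ((hd τ hτ).sub_const a)
  have hanti : AntitoneOn Ψ (Set.Ici (0 : ℝ)) := by
    apply antitoneOn_of_deriv_nonpos (convex_Ici 0)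
    · exact fun τ hτ => (hdΨ τ hτ).continuousAt.continuousWithinAt
    · intro τ hτ
      rw [interior_Ici] at hτ
      exact (hdΨ τ (le_of_lt hτ)).differentiableAt.differentiableWithinAt
    · intro τ hτ
      rw [interior_Ici] at hτ
      rw [(hdΨ τ hτ.le).deriv]
      have h1 := hineq τ hτ
      have h2 := Real.exp_pos (k * τ)
      nlinarith
  have h3 : Ψ t ≤ Ψ 0 := hanti Set.self_mem_Ici (Set.mem_Ici.2 ht) ht
  have hΨ0 : Ψ 0 = φ 0 - a := by simp [hΨ]
  have h4 : Real.exp (k * t) * (φ t - a) ≤ φ 0 - a := by rw [hΨ0] at h3; exact h3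
  have h5 := mul_le_mul_of_nonneg_left h4 (Real.exp_nonneg (-(k * t)))
  rw [← mul_assoc, ← Real.exp_add, neg_add_cancel, Real.exp_zero, one_mul] at h5
  linarith

set_option maxHeartbeats 2000000 in
/-- Stretched exponential decay to equilibrium under a weak Poincaré
inequality with rate function `β(s) = c·(log(2/(s∧1)))^{2(1/p-1)}` (the sub-exponential
case), `p ∈ (0,1)`. -/
theorem stretched_exponential_decay_from_weak_poincare
    (p c : ℝ) (hp0 : 0 < p) (hp1 : p < 1) (hc : 0 < c) :
    ∃ C : ℝ, 0 < C ∧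
      ∀ ν : Measure ℝ, IsProbabilityMeasure ν →
        WeakPoincare ν (fun s => c * (Real.log (2 / min s 1)) ^ (2 * (1 / p - 1))) →
      ∀ S : ℝ → (ℝ → ℝ) → (ℝ → ℝ), SemigroupHyp ν S →
      ∀ f : ℝ → ℝ, BddSmooth f → ∀ t : ℝ, 0 < t →
        var ν (S t f) ≤
          (1 / C) * Real.exp (-C * t ^ (p / (2 - p))) *
            (supNorm fun x => f x - ∫ y, f y ∂ν) ^ 2 := by
  have h2p : (0 : ℝ) < 2 - p := by linarith
  set α : ℝ := p / (2 - p) with hα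
  set q : ℝ := 2 * (1 / p - 1) with hq
  have hα0 : 0 < α := div_pos hp0 h2p
  set K : ℝ := (2 / c) ^ α with hK
  have hKpos : 0 < K := Real.rpow_pos_of_pos (by positivity) _
  set C : ℝ := min K (1 / 9) with hC
  have hC0 : 0 < C := lt_min hKpos (by norm_num)
  refine ⟨C, hC0, ?_⟩
  intro ν hν WP S hS f hf t ht
  set m : ℝ := ∫ y, f y ∂ν with hm
  set h : ℝ → ℝ := fun x => f x - m with hh
  have hhs : BddSmooth h := hf.sub_const' m
  have hint_f : Integrable f ν := hf.integrable' ν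
  have hh0 : ∫ y, h y ∂ν = 0 := by
    simp [hh, integral_sub hint_f (integrable_const m), ← hm]
  set M : ℝ := supNorm h with hM
  have hMb : ∀ x, |h x| ≤ M := fun x => abs_le_supNorm' hhs.2.choose_spec x
  have hM0 : 0 ≤ M := le_trans (abs_nonneg _) (hMb 0)
  set φ : ℝ → ℝ := fun τ => ∫ x, (S τ h x - ∫ y, h y ∂ν) ^ 2 ∂ν with hφdef
  set G : ℝ → ℝ := fun τ => ∫ x, (deriv (S τ h) x) ^ 2 ∂ν with hGdef
  have hderiv : ∀ τ, 0 ≤ τ → HasDerivAt φ (-2 * G τ) τ := fun τ hτ =>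
    hS.l2deriv h hhs τ hτ
  have hφ' : ∀ τ, φ τ = ∫ x, (S τ h x) ^ 2 ∂ν := by
    intro τ; simp [hφdef, hh0]
  have hG0 : ∀ τ, 0 ≤ G τ := fun τ => integral_nonneg fun x => sq_nonneg _
  have hφ0 : φ 0 ≤ M ^ 2 := by
    rw [hφ' 0, hS.idZero h hhs]
    calc ∫ x, h x ^ 2 ∂ν ≤ ∫ _x, M ^ 2 ∂ν := by
          refine integral_mono (hhs.sq'.integrable' ν) (integrable_const _) fun x => ?_
          exact sq_le_sq' (by linarith [(abs_le.1 (hMb x)).1]) (abs_le.1 (hMb x)).2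
      _ = M ^ 2 := by simp
  have hvar : ∀ τ, 0 ≤ τ → var ν (S τ h) = φ τ := by
    intro τ hτ
    rw [hφ' τ, var, hS.invariant τ hτ h hhs, hh0]
    ring
  -- the main decay bound
  set L : ℝ := (2 * t / c) ^ α with hLdef
  have h2tc : (0 : ℝ) < 2 * t / c := by positivity
  have hLpos : 0 < L := Real.rpow_pos_of_pos h2tc α
  have hL1q : L ^ (q + 1) = 2 * t / c := by
    rw [hLdef, ← Real.rpow_mul h2tc.le]
    have hexp1 : α * (q + 1) = 1 := by
      rw [hα, hq]
      field_simp
      ring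
    rw [hexp1, Real.rpow_one]
  have hbL : c * L ^ q * L = 2 * t := by
    have h1 : L ^ q * L = L ^ (q + 1) := (Real.rpow_add_one hLpos.ne' q).symm
    rw [mul_assoc, h1, hL1q]
    field_simp
  have main : φ t ≤ 9 * Real.exp (-L) * M ^ 2 := by
    by_cases hcase : Real.log 2 ≤ L
    · -- large time: choose s = 2 exp(-L)
      set s : ℝ := 2 * Real.exp (-L) with hsdef
      have hs0 : 0 < s := by positivity
      have hexpL : Real.exp (-L) ≤ 1 / 2 := by
        have h2 : (2 : ℝ) ≤ Real.exp L := by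
          rw [← Real.exp_log (by norm_num : (0:ℝ) < 2)]
          exact Real.exp_le_exp.2 hcase
        rw [Real.exp_neg]
        rw [inv_le_comm₀ (Real.exp_pos L) (by norm_num)]
        simpa using h2
      have hs1 : s ≤ 1 := by rw [hsdef]; linarith
      have hmin : min s 1 = s := min_eq_left hs1
      have hlogs : Real.log (2 / s) = L := by
        rw [hsdef]
        have : (2 : ℝ) / (2 * Real.exp (-L)) = Real.exp L := by
          rw [Real.exp_neg]
          field_simp
        rw [this, Real.log_exp]
      set b : ℝ := c * L ^ q with hbdef
      have hb0 : 0 < b := mul_pos hc (Real.rpow_pos_of_pos hLpos q)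
      set k : ℝ := 2 / b with hk
      have hk0 : 0 < k := by positivity
      have hkt : k * t = L := by
        rw [hk, div_mul_eq_mul_div, div_eq_iff hb0.ne']
        linear_combination -hbL
      have key : ∀ τ, 0 < τ → k * (φ τ - 4 * s * M ^ 2) ≤ 2 * G τ := by
        intro τ hτ
        have hwp := WP (S τ h) (hS.stable τ hτ.le h hhs) s hs0
        simp only [hmin, hlogs] at hwp
        rw [hvar τ hτ.le] at hwp
        have hosc : osc (S τ h) ^ 2 ≤ 4 * M ^ 2 :=
          osc_sq_le' (fun x => hS.contraction τ hτ.le h hhs x)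
        have h1 : φ τ - 4 * s * M ^ 2 ≤ b * G τ := by
          have : s * osc (S τ h) ^ 2 ≤ s * (4 * M ^ 2) :=
            mul_le_mul_of_nonneg_left hosc hs0.le
          rw [hbdef, hGdef]
          nlinarith [hwp]
        calc k * (φ τ - 4 * s * M ^ 2) ≤ k * (b * G τ) :=
              mul_le_mul_of_nonneg_left h1 hk0.le
          _ = 2 * G τ := by
              rw [hk, div_mul_eq_mul_div, mul_comm b (G τ), ← mul_assoc, mul_div_assoc,
                div_self hb0.ne', mul_one]
      have gr := gronwall_aux φ G k (4 * s * M ^ 2) hk0.le hderiv key t ht.le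
      have h6 : Real.exp (-(k * t)) * (φ 0 - 4 * s * M ^ 2) ≤ Real.exp (-L) * M ^ 2 := by
        rw [hkt]
        have h6' : φ 0 - 4 * s * M ^ 2 ≤ M ^ 2 := by nlinarith [hs0, sq_nonneg M, hφ0]
        exact mul_le_mul_of_nonneg_left h6' (Real.exp_nonneg (-L))
      have h7 : 4 * s * M ^ 2 = 8 * Real.exp (-L) * M ^ 2 := by rw [hsdef]; ring
      linarith
    · -- small time: φ t ≤ φ 0 ≤ M² and exp(-L) ≥ 1/2
      push_neg at hcase
      have gr := gronwall_aux φ G 0 0 le_rfl hderiv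
        (fun τ hτ => by simpa using mul_nonneg (by norm_num : (0:ℝ) ≤ 2) (hG0 τ)) t ht.le
      simp only [zero_mul, neg_zero, Real.exp_zero, one_mul, sub_zero, add_zero, zero_add] at gr
      have hE : 1 / 2 ≤ Real.exp (-L) := by
        have : Real.exp (-Real.log 2) ≤ Real.exp (-L) := Real.exp_le_exp.2 (by linarith)
        rw [Real.exp_neg, Real.exp_log (by norm_num : (0:ℝ) < 2)] at this
        linarith
      nlinarith [sq_nonneg M, hφ0, gr]
  -- identify var ν (S t f) with φ t
  have hSf : BddSmooth (S t f) := hS.stable t ht.le f hf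
  have hmS : ∫ x, S t f x ∂ν = m := hS.invariant t ht.le f hf
  set one : ℝ → ℝ := fun _ => (1 : ℝ) with hone_def
  have hone : BddSmooth one := ⟨contDiff_const, 1, fun x => by simp [hone_def]⟩
  have hsupone : supNorm one = 1 := by
    simp [supNorm, hone_def]
  have hsplit : S t f = fun x => m * S t one x + S t h x := by
    have hfe : f = fun y => m * one y + h y := by
      funext y; simp [hone_def, hh]
    conv_lhs => rw [hfe]
    exact hS.linear t ht.le m one h hone hhs
  have hSone_ae : ∀ᵐ x ∂ν, S t one x = 1 := by
    have hb : ∀ x, |S t one x| ≤ 1 := by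
      intro x
      have := hS.contraction t ht.le one hone x
      rwa [hsupone] at this
    have hSone_int : Integrable (S t one) ν := (hS.stable t ht.le one hone).integrable' ν
    have hui : Integrable (fun x => 1 - S t one x) ν := (integrable_const 1).sub hSone_int
    have hu0 : 0 ≤ fun x => 1 - S t one x := by
      intro x
      have := (abs_le.1 (hb x)).2
      simp only [Pi.zero_apply]
      linarith
    have huz : ∫ x, (1 - S t one x) ∂ν = 0 := by
      rw [integral_sub (integrable_const 1) hSone_int, hS.invariant t ht.le one hone]
      simp [hone_def]
    have := (integral_eq_zero_iff_of_nonneg hu0 hui).1 huz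
    filter_upwards [this] with x hx
    have hx' : 1 - S t one x = 0 := hx
    linarith
  have hae : (fun x => (S t f x - m) ^ 2) =ᵐ[ν] fun x => (S t h x) ^ 2 := by
    filter_upwards [hSone_ae] with x hx
    have : S t f x = m * S t one x + S t h x := by rw [hsplit]
    rw [this, hx]
    ring
  have hvarf : var ν (S t f) = φ t := by
    rw [var_eq_integral' ν (hSf.integrable' ν) (hSf.sq'.integrable' ν), hmS,
      integral_congr_ae hae, ← hφ' t]
  -- conclude
  have hLK : L = K * t ^ α := by
    rw [hLdef, show 2 * t / c = 2 / c * t by ring, Real.mul_rpow (by positivity) ht.le, hK]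
  have htα : 0 ≤ t ^ α := Real.rpow_nonneg ht.le α
  have e1 : Real.exp (-L) ≤ Real.exp (-(C * t ^ α)) := by
    apply Real.exp_le_exp.2
    rw [hLK]
    have : C * t ^ α ≤ K * t ^ α :=
      mul_le_mul_of_nonneg_right (min_le_left _ _) htα
    linarith
  have e2 : (9 : ℝ) ≤ 1 / C := by
    rw [le_div_iff₀ hC0]
    have : C ≤ 1 / 9 := min_le_right _ _
    linarith
  rw [hvarf]
  calc φ t ≤ 9 * Real.exp (-L) * M ^ 2 := main
    _ ≤ 1 / C * Real.exp (-(C * t ^ α)) * M ^ 2 := by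
        apply mul_le_mul_of_nonneg_right _ (sq_nonneg M)
        exact mul_le_mul e2 e1 (Real.exp_nonneg _) (by positivity)
    _ = 1 / C * Real.exp (-C * t ^ α) * M ^ 2 := by rw [neg_mul]
end
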